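/- arXiv:2009.04850 — 4 statements merged into one kernel-verified Lean document; each statement's English description precedes it below -/
import Mathlib

section
/- Let f : [0,1] → ℝ be M-Lipschitz, n ≥ 2, x_i = (i-1)/(n-1), δ ∈ [0,1/2] with 2δ + M/(n-1) < 1/2, and η_i ∈ [-δ,δ]. Let ĝ(x_i) be the fractional part of f(x_i) + η_i, and define f̃ by the sequential unwrapping recursion f̃(x_1) = ĝ(x_1), f̃(x_i) = f̃(x_{i-1}) + U(ĝ(x_i) - ĝ(x_{i-1})) where U(u) = u if |u| < 1/2, 1+u if u < -1/2, -1+u if u > 1/2. Then there exists q* ∈ ℤ such that |f̃(x_i) + q* - f(x_i)| ≤ δ for all i = 1,…,n. -/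
/-- The unwrapping increment. -/
noncomputable def U (u : ℝ) : ℝ :=
  if |u| < 1/2 then u else if u < -(1/2) then 1 + u else if u > 1/2 then -1 + u else u

lemma Ueq (a b : ℝ) (h : |a - b| < 1/2) :
    U (Int.fract a - Int.fract b) = a - b := by
  have ha := Int.fract_nonneg a
  have ha' := Int.fract_lt_one a
  have hb := Int.fract_nonneg b
  have hb' := Int.fract_lt_one b
  have key : Int.fract a - Int.fract b = (a - b) - ((⌊a⌋ - ⌊b⌋ : ℤ) : ℝ) := by
    unfold Int.fract; push_cast; ring
  set k : ℤ := ⌊a⌋ - ⌊b⌋ with hk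
  have habs := abs_lt.mp h
  have hr1 : -1 < Int.fract a - Int.fract b := by linarith
  have hr2 : Int.fract a - Int.fract b < 1 := by linarith
  have hk2 : (k : ℝ) < 2 := by rw [key] at hr1; linarith
  have hk3 : (-2 : ℝ) < (k : ℝ) := by rw [key] at hr2; linarith
  have hk2' : k < 2 := by exact_mod_cast hk2
  have hk3' : -2 < k := by exact_mod_cast hk3
  interval_cases k
  · -- k = -1 : u = a - b + 1 > 1/2
    rw [key]
    have hu1 : (1:ℝ)/2 < (a - b) - ((-1 : ℤ) : ℝ) := by push_cast; linarith
    have hu2 : (a - b) - ((-1 : ℤ) : ℝ) < 1 := by rw [key] at hr2; exact hr2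
    unfold U
    rw [if_neg, if_neg, if_pos hu1]
    · push_cast; ring
    · linarith
    · rw [abs_lt]; push_neg; intro h'; linarith
  · -- k = 0
    rw [key]
    unfold U
    rw [if_pos]
    · push_cast; ring
    · push_cast; rw [sub_zero]; exact h
  · -- k = 1 : u = a - b - 1 < -1/2
    rw [key]
    have hu1 : (a - b) - ((1 : ℤ) : ℝ) < -(1/2) := by push_cast; linarith
    unfold U
    rw [if_neg, if_pos hu1]
    · push_cast; ring
    · rw [abs_lt]; push_neg; intro h'; linarith

theorem stmt7 (f : ℝ → ℝ) (M : ℝ) (hM : 0 < M) (n : ℕ) (hn : 2 ≤ n)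
    (hf : ∀ x ∈ Set.Icc (0:ℝ) 1, ∀ y ∈ Set.Icc (0:ℝ) 1, |f x - f y| ≤ M * |x - y|)
    (δ : ℝ) (hδ : δ ∈ Set.Icc (0:ℝ) (1/2))
    (η : ℕ → ℝ) (hη : ∀ i, 1 ≤ i → i ≤ n → |η i| ≤ δ)
    (hcond : 2 * δ + M / ((n:ℝ) - 1) < 1/2)
    (x : ℕ → ℝ) (hx : ∀ i, x i = ((i:ℝ) - 1) / ((n:ℝ) - 1))
    (gh : ℕ → ℝ) (hgh : ∀ i, gh i = Int.fract (f (x i) + η i))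
    (ftil : ℕ → ℝ) (h1 : ftil 1 = gh 1)
    (hrec : ∀ i, 2 ≤ i → i ≤ n → ftil i = ftil (i-1) + U (gh i - gh (i-1))) :
    ∃ q : ℤ, ∀ i, 1 ≤ i → i ≤ n → |ftil i + (q:ℝ) - f (x i)| ≤ δ := by
  have hn1 : (1:ℝ) ≤ (n:ℝ) - 1 := by
    have : (2:ℝ) ≤ (n:ℝ) := by exact_mod_cast hn
    linarith
  have hn0 : (0:ℝ) < (n:ℝ) - 1 := by linarith
  -- x i ∈ [0,1] for 1 ≤ i ≤ n
  have hxmem : ∀ i, 1 ≤ i → i ≤ n → x i ∈ Set.Icc (0:ℝ) 1 := by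
    intro i hi1 hin
    rw [hx i]
    constructor
    · apply div_nonneg _ (le_of_lt hn0)
      have : (1:ℝ) ≤ (i:ℝ) := by exact_mod_cast hi1
      linarith
    · rw [div_le_one hn0]
      have : (i:ℝ) ≤ (n:ℝ) := by exact_mod_cast hin
      linarith
  -- key: ftil i = f (x i) + η i - ⌊f (x 1) + η 1⌋
  have hmain : ∀ i, 1 ≤ i → i ≤ n →
      ftil i = f (x i) + η i - ((⌊f (x 1) + η 1⌋ : ℤ) : ℝ) := by
    intro i hi1
    induction i, hi1 using Nat.le_induction with
    | base =>
      intro _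
      rw [h1, hgh 1, Int.fract]
    | succ i hi ih =>
      intro hin
      have hin' : i ≤ n := le_trans (Nat.le_succ i) hin
      have hrec' := hrec (i+1) (by omega) hin
      have hsub : (i + 1) - 1 = i := by omega
      rw [hsub] at hrec'
      -- bound on consecutive difference
      have hxi := hxmem i hi hin'
      have hxi1 := hxmem (i+1) (by omega) hin
      have hxd : x (i+1) - x i = 1 / ((n:ℝ) - 1) := by
        rw [hx (i+1), hx i, div_sub_div_same]
        congr 1
        push_cast; ring
      have hfd : |f (x (i+1)) - f (x i)| ≤ M / ((n:ℝ) - 1) := by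
        have := hf (x (i+1)) hxi1 (x i) hxi
        rw [hxd] at this
        rwa [abs_of_pos (div_pos one_pos hn0), mul_one_div] at this
      have hηi := hη i hi hin'
      have hηi1 := hη (i+1) (by omega) hin
      have hdiff : |(f (x (i+1)) + η (i+1)) - (f (x i) + η i)| < 1/2 := by
        have : |(f (x (i+1)) + η (i+1)) - (f (x i) + η i)| ≤
            |f (x (i+1)) - f (x i)| + |η (i+1)| + |η i| := by
          have := abs_sub_abs_le_abs_sub (f (x (i+1))) (f (x i))
          calc |(f (x (i+1)) + η (i+1)) - (f (x i) + η i)|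
              = |(f (x (i+1)) - f (x i)) + (η (i+1) - η i)| := by ring_nf
            _ ≤ |f (x (i+1)) - f (x i)| + |η (i+1) - η i| := abs_add_le _ _
            _ ≤ |f (x (i+1)) - f (x i)| + (|η (i+1)| + |η i|) := by
                gcongr; exact abs_sub (η (i+1)) (η i)
            _ = |f (x (i+1)) - f (x i)| + |η (i+1)| + |η i| := by ring
        linarith
      have hU : U (gh (i+1) - gh i) =
          (f (x (i+1)) + η (i+1)) - (f (x i) + η i) := by
        rw [hgh (i+1), hgh i]
        exact Ueq _ _ hdiff
      rw [hrec', hU, ih hin']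
      ring
  refine ⟨⌊f (x 1) + η 1⌋, fun i hi1 hin => ?_⟩
  rw [hmain i hi1 hin]
  have : f (x i) + η i - ((⌊f (x 1) + η 1⌋ : ℤ) : ℝ) + ((⌊f (x 1) + η 1⌋ : ℤ) : ℝ)
      - f (x i) = η i := by ring
  rw [this]
  exact hη i hi1 hin
end

section
/- Under the assumptions that f : [0,1]^d → ℝ is M-Lipschitz (ℓ∞ norm), m ≥ 2, the grid is uniform with spacing 1/(m-1), η_𝐢 ∈ [-δ,δ], 2δ + M/(m-1) < 1/2, f̂(x_𝐢) = f(x_𝐢) + η_𝐢, and ĝ(x_𝐢) is the fractional part of f̂(x_𝐢): for each direction j and each multi-index 𝐢 with i_j > 1, D_j f̂(x_𝐢) equals D_j ĝ(x_𝐢) if |D_j ĝ(x_𝐢)| < 1/2, equals 1 + D_j ĝ(x_𝐢) if D_j ĝ(x_𝐢) < -1/2, and equals -1 + D_j ĝ(x_𝐢) if D_j ĝ(x_𝐢) > 1/2. -/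
/-!
Neighbouring grid points are at sup-distance `1/(m-1)`, so the noisy samples of neighbours differ
by at most `M/(m-1) + 2δ < 1/2`. Two reals that close differ by the difference of their fractional
parts plus an integer, and that integer is forced to be `0`, `1` or `-1` according to whether the
difference of fractional parts lies in `(-1/2, 1/2)`, below `-1/2` or above `1/2`.
-/

open Function

section FractUnwrap

variable {α : Type*} [Field α] [LinearOrder α] [IsStrictOrderedRing α] [FloorRing α]

theorem sub_eq_fract_sub_add_intCast {a b : α} (c : ℤ) (hab : |a - b| < 1 / 2)
    (hc : |Int.fract a - Int.fract b + c| < 1 / 2) :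
    a - b = Int.fract a - Int.fract b + c := by
  have hsplit : a - b = Int.fract a - Int.fract b + ((⌊a⌋ - ⌊b⌋ : ℤ) : α) := by
    rw [Int.fract, Int.fract]; push_cast; ring
  have hclose : |((⌊a⌋ - ⌊b⌋ - c : ℤ) : α)| < 1 :=
    calc |((⌊a⌋ - ⌊b⌋ - c : ℤ) : α)| = |(a - b) - (Int.fract a - Int.fract b + c)| := by
          rw [hsplit]; push_cast; ring_nf
      _ ≤ |a - b| + |Int.fract a - Int.fract b + c| := abs_sub _ _
      _ < 1 := by linarith
  have hc_eq : ⌊a⌋ - ⌊b⌋ = c := sub_eq_zero.mp (Int.abs_lt_one_iff.mp (by exact_mod_cast hclose))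
  rw [hsplit, hc_eq]

theorem sub_eq_fract_sub_cases {a b : α} (hab : |a - b| < 1 / 2) :
    (|Int.fract a - Int.fract b| < 1 / 2 → a - b = Int.fract a - Int.fract b) ∧
    (Int.fract a - Int.fract b < -(1 / 2) → a - b = 1 + Int.fract a - Int.fract b) ∧
    (Int.fract a - Int.fract b > 1 / 2 → a - b = -1 + Int.fract a - Int.fract b) := by
  have ha₀ := Int.fract_nonneg a
  have ha₁ := Int.fract_lt_one a
  have hb₀ := Int.fract_nonneg b
  have hb₁ := Int.fract_lt_one b
  refine ⟨fun h => ?_, fun h => ?_, fun h => ?_⟩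
  · simpa using sub_eq_fract_sub_add_intCast 0 hab (by simpa using h)
  · have := sub_eq_fract_sub_add_intCast 1 hab
      (by rw [abs_lt]; push_cast; constructor <;> linarith)
    push_cast at this; linarith
  · have := sub_eq_fract_sub_add_intCast (-1) hab
      (by rw [abs_lt]; push_cast; constructor <;> linarith)
    push_cast at this; linarith

end FractUnwrap

section Grid

variable {d : ℕ}

noncomputable def gridPoint (m : ℕ) (i : Fin d → ℕ) : Fin d → ℝ :=
  fun j => ((i j : ℝ) - 1) / ((m : ℝ) - 1)

theorem gridPoint_mem_Icc {m : ℕ} {i : Fin d → ℕ} (hi : ∀ j, 1 ≤ i j ∧ i j ≤ m) (j : Fin d) :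
    gridPoint m i j ∈ Set.Icc (0 : ℝ) 1 := by
  have h₁ : (1 : ℝ) ≤ i j := by exact_mod_cast (hi j).1
  have h₂ : (i j : ℝ) ≤ m := by exact_mod_cast (hi j).2
  exact ⟨div_nonneg (by linarith) (by linarith),
    div_le_one_of_le₀ (by linarith) (by linarith)⟩

theorem update_pred_mem_grid {m : ℕ} {i : Fin d → ℕ} (hi : ∀ j, 1 ≤ i j ∧ i j ≤ m) {j : Fin d}
    (hij : 2 ≤ i j) (k : Fin d) : 1 ≤ update i j (i j - 1) k ∧ update i j (i j - 1) k ≤ m := by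
  rcases eq_or_ne k j with rfl | hkj
  · simp only [update_self]; have := hi k; omega
  · simpa only [update_of_ne hkj] using hi k

theorem gridPoint_sub_update_pred (m : ℕ) (i : Fin d → ℕ) {j : Fin d} (hij : 1 ≤ i j) :
    gridPoint m i - gridPoint m (update i j (i j - 1)) = Pi.single j (1 / ((m : ℝ) - 1)) := by
  ext k
  rcases eq_or_ne k j with rfl | hkj
  · simp only [gridPoint, Pi.sub_apply, update_self, Pi.single_eq_same, Nat.cast_sub hij]
    ring
  · simp [gridPoint, update_of_ne hkj, Pi.single_eq_of_ne hkj]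

theorem norm_gridPoint_sub_update_pred {m : ℕ} (hm : 1 ≤ m) (i : Fin d → ℕ) {j : Fin d}
    (hij : 1 ≤ i j) :
    ‖gridPoint m i - gridPoint m (update i j (i j - 1))‖ = 1 / ((m : ℝ) - 1) := by
  have hm' : (1 : ℝ) ≤ m := by exact_mod_cast hm
  rw [gridPoint_sub_update_pred m i hij, Pi.norm_single,
    Real.norm_of_nonneg (one_div_nonneg.mpr (by linarith))]

end Grid

theorem stmt9_general (d m : ℕ)
    (f : (Fin d → ℝ) → ℝ) (M : ℝ)
    (hf : ∀ x y : Fin d → ℝ, (∀ j, x j ∈ Set.Icc (0:ℝ) 1) → (∀ j, y j ∈ Set.Icc (0:ℝ) 1) →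
      |f x - f y| ≤ M * ‖x - y‖)
    (δ : ℝ)
    (η : (Fin d → ℕ) → ℝ) (hη : ∀ i, (∀ j, 1 ≤ i j ∧ i j ≤ m) → |η i| ≤ δ)
    (hcond : 2 * δ + M / ((m:ℝ) - 1) < 1/2)
    (x : (Fin d → ℕ) → (Fin d → ℝ)) (hx : ∀ i j, x i j = ((i j : ℝ) - 1) / ((m:ℝ) - 1))
    (fh : (Fin d → ℕ) → ℝ) (hfh : ∀ i, fh i = f (x i) + η i)
    (gh : (Fin d → ℕ) → ℝ) (hgh : ∀ i, gh i = Int.fract (fh i)) :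
    ∀ i : Fin d → ℕ, (∀ j, 1 ≤ i j ∧ i j ≤ m) → ∀ j : Fin d, 2 ≤ i j →
      (|gh i - gh (Function.update i j (i j - 1))| < 1/2 →
        fh i - fh (Function.update i j (i j - 1)) = gh i - gh (Function.update i j (i j - 1))) ∧
      (gh i - gh (Function.update i j (i j - 1)) < -(1/2) →
        fh i - fh (Function.update i j (i j - 1)) = 1 + gh i - gh (Function.update i j (i j - 1))) ∧
      (gh i - gh (Function.update i j (i j - 1)) > 1/2 →
        fh i - fh (Function.update i j (i j - 1)) = -1 + gh i - gh (Function.update i j (i j - 1))) := by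
  intro i hi j hij
  set i' := update i j (i j - 1)
  have hi' := update_pred_mem_grid hi hij
  have hx : x = gridPoint m := funext fun i => funext (hx i)
  subst hx
  have hdiff : |fh i - fh i'| < 1 / 2 := by
    have hlip := hf _ _ (gridPoint_mem_Icc hi) (gridPoint_mem_Icc hi')
    rw [norm_gridPoint_sub_update_pred ((hi j).1.trans (hi j).2) i (by omega), mul_one_div] at hlip
    have hηi := abs_le.mp (hη i hi)
    have hηi' := abs_le.mp (hη i' hi')
    rw [hfh, hfh, abs_lt]
    constructor <;> linarith [abs_le.mp hlip]
  simp only [hgh]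
  exact sub_eq_fract_sub_cases hdiff

theorem stmt9 (d m : ℕ) (hd : 1 ≤ d) (hm : 2 ≤ m)
    (f : (Fin d → ℝ) → ℝ) (M : ℝ) (hM : 0 < M)
    (hf : ∀ x y : Fin d → ℝ, (∀ j, x j ∈ Set.Icc (0:ℝ) 1) → (∀ j, y j ∈ Set.Icc (0:ℝ) 1) →
      |f x - f y| ≤ M * ‖x - y‖)
    (δ : ℝ) (hδ : δ ∈ Set.Icc (0:ℝ) (1/2))
    (η : (Fin d → ℕ) → ℝ) (hη : ∀ i, (∀ j, 1 ≤ i j ∧ i j ≤ m) → |η i| ≤ δ)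
    (hcond : 2 * δ + M / ((m:ℝ) - 1) < 1/2)
    (x : (Fin d → ℕ) → (Fin d → ℝ)) (hx : ∀ i j, x i j = ((i j : ℝ) - 1) / ((m:ℝ) - 1))
    (fh : (Fin d → ℕ) → ℝ) (hfh : ∀ i, fh i = f (x i) + η i)
    (gh : (Fin d → ℕ) → ℝ) (hgh : ∀ i, gh i = Int.fract (fh i)) :
    ∀ i : Fin d → ℕ, (∀ j, 1 ≤ i j ∧ i j ≤ m) → ∀ j : Fin d, 2 ≤ i j →
      (|gh i - gh (Function.update i j (i j - 1))| < 1/2 →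
        fh i - fh (Function.update i j (i j - 1)) = gh i - gh (Function.update i j (i j - 1))) ∧
      (gh i - gh (Function.update i j (i j - 1)) < -(1/2) →
        fh i - fh (Function.update i j (i j - 1)) = 1 + gh i - gh (Function.update i j (i j - 1))) ∧
      (gh i - gh (Function.update i j (i j - 1)) > 1/2 →
        fh i - fh (Function.update i j (i j - 1)) = -1 + gh i - gh (Function.update i j (i j - 1))) :=
  stmt9_general d m f M hf δ η hη hcond x hx fh hfh gh hgh
end

section
/- Let f : [0,1]^d → ℝ be M-Lipschitz in the ℓ∞ norm, m ≥ 2, and let x_𝐢 for 𝐢 ∈ {1,…,m}^d be the uniform grid with spacing 1/(m-1). Let δ ∈ [0,1/2] satisfy 2δ + M/(m-1) < 1/2, let η_𝐢 ∈ [-δ,δ], and let ĝ(x_𝐢) be the fractional part of f(x_𝐢) + η_𝐢. Let f̃ be the output of the multivariate sequential unwrapping algorithm applied to ĝ. Then there exists q* ∈ ℤ such that |f̃(x_𝐢) + q* - f(x_𝐢)| ≤ δ for all 𝐢 ∈ {1,…,m}^d. -/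
lemma close_int (v w : ℝ) (n : ℤ) (h : v - w = (n:ℝ)) (hv : |v| ≤ 1/2) (hw : |w| < 1/2) :
    v = w := by
  have h1 : |(n:ℝ)| < 1 := by
    rw [← h]
    calc |v - w| ≤ |v| + |w| := abs_sub _ _
    _ < 1 := by linarith
  have h2 : |n| < 1 := by exact_mod_cast h1
  have h3 : n = 0 := by
    rcases abs_lt.mp h2 with ⟨ha, hb⟩; omega
  rw [h3] at h; push_cast at h; linarith

lemma U_fract_sub (a b : ℝ) (hab : |a - b| < 1/2) :
    U (Int.fract a - Int.fract b) = a - b := by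
  have hfa := Int.fract_nonneg a
  have hfa' := Int.fract_lt_one a
  have hfb := Int.fract_nonneg b
  have hfb' := Int.fract_lt_one b
  have hkey : Int.fract a - Int.fract b - (a - b) = (⌊b⌋ : ℝ) - (⌊a⌋ : ℝ) := by
    rw [Int.fract, Int.fract]; ring
  unfold U
  split_ifs with h1 h2 h3
  · exact close_int _ _ (⌊b⌋ - ⌊a⌋) (by push_cast; linarith) (le_of_lt h1) hab
  · refine close_int _ _ (⌊b⌋ - ⌊a⌋ + 1) (by push_cast; linarith) ?_ hab
    rw [abs_le]; constructor <;> linarith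
  · refine close_int _ _ (⌊b⌋ - ⌊a⌋ - 1) (by push_cast; linarith) ?_ hab
    rw [abs_le]; constructor <;> linarith
  · refine close_int _ _ (⌊b⌋ - ⌊a⌋) (by push_cast; linarith) ?_ hab
    rw [abs_le]; constructor <;> linarith

theorem stmt11 (d m : ℕ) (hd : 1 ≤ d) (hm : 2 ≤ m)
    (f : (Fin d → ℝ) → ℝ) (M : ℝ) (hM : 0 < M)
    (hf : ∀ x y : Fin d → ℝ, (∀ j, x j ∈ Set.Icc (0:ℝ) 1) → (∀ j, y j ∈ Set.Icc (0:ℝ) 1) →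
      |f x - f y| ≤ M * ‖x - y‖)
    (δ : ℝ) (hδ : δ ∈ Set.Icc (0:ℝ) (1/2))
    (η : (Fin d → ℕ) → ℝ) (hη : ∀ i, (∀ j, 1 ≤ i j ∧ i j ≤ m) → |η i| ≤ δ)
    (hcond : 2 * δ + M / ((m:ℝ) - 1) < 1/2)
    (x : (Fin d → ℕ) → (Fin d → ℝ)) (hx : ∀ i j, x i j = ((i j : ℝ) - 1) / ((m:ℝ) - 1))
    (gh : (Fin d → ℕ) → ℝ) (hgh : ∀ i, gh i = Int.fract (f (x i) + η i))
    (ftil : (Fin d → ℕ) → ℝ)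
    (hinit : ftil (fun _ => 1) = gh (fun _ => 1))
    (hrec : ∀ i : Fin d → ℕ, (∀ k, 1 ≤ i k ∧ i k ≤ m) → ∀ j : Fin d,
      (∀ k, j < k → i k = 1) → 2 ≤ i j →
      ftil i = ftil (Function.update i j (i j - 1)) +
        U (gh i - gh (Function.update i j (i j - 1)))) :
    ∃ q : ℤ, ∀ i : Fin d → ℕ, (∀ k, 1 ≤ i k ∧ i k ≤ m) →
      |ftil i + (q:ℝ) - f (x i)| ≤ δ := by
  have hm1 : (1:ℝ) ≤ (m:ℝ) - 1 := by
    have : (2:ℝ) ≤ (m:ℝ) := by exact_mod_cast hm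
    linarith
  have hm0 : (0:ℝ) < (m:ℝ) - 1 := by linarith
  set one : Fin d → ℕ := fun _ => 1 with hone
  set h : (Fin d → ℕ) → ℝ := fun i => f (x i) + η i with hh
  have hxmem : ∀ i : Fin d → ℕ, (∀ k, 1 ≤ i k ∧ i k ≤ m) → ∀ j, x i j ∈ Set.Icc (0:ℝ) 1 := by
    intro i hi j
    rw [hx]
    constructor
    · apply div_nonneg _ (le_of_lt hm0)
      have h1 : (1:ℝ) ≤ (i j : ℝ) := by exact_mod_cast (hi j).1
      linarith
    · rw [div_le_one hm0]
      have h2 : (i j : ℝ) ≤ (m:ℝ) := by exact_mod_cast (hi j).2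
      linarith
  refine ⟨⌊h one⌋, ?_⟩
  have key : ∀ n : ℕ, ∀ i, (∑ k, i k) = n → (∀ k, 1 ≤ i k ∧ i k ≤ m) →
      ftil i = h i - (⌊h one⌋ : ℝ) := by
    intro n
    induction n using Nat.strong_induction_on with
    | _ n ih =>
      intro i hsum hi
      by_cases hio : i = one
      · subst hio
        rw [hinit, hgh]
        rw [show Int.fract (f (x one) + η one) = Int.fract (h one) from rfl,
          ← Int.self_sub_floor]
      · have hex : ∃ k, 2 ≤ i k := by
          by_contra hc
          push_neg at hc
          apply hio
          funext k
          have h1 := (hi k).1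
          have h2 := hc k
          show i k = 1
          omega
        obtain ⟨j, hjmem, hjle⟩ := Finset.exists_max_image
            (Finset.univ.filter (fun k => 2 ≤ i k)) id
            (by obtain ⟨k, hk⟩ := hex; exact ⟨k, by simp [hk]⟩)
        simp only [Finset.mem_filter, Finset.mem_univ, true_and] at hjmem
        have hj2 : 2 ≤ i j := hjmem
        have hjmax : ∀ k, j < k → i k = 1 := by
          intro k hk
          by_contra hc
          have h2 : 2 ≤ i k := by have := (hi k).1; omega
          have hle : k ≤ j := hjle k (by simp [h2])
          exact absurd hk (not_lt.mpr hle)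
        set i' := Function.update i j (i j - 1) with hi'def
        have hi'j : i' j = i j - 1 := by simp [hi'def]
        have hi'k : ∀ k, k ≠ j → i' k = i k := by
          intro k hk; simp [hi'def, Function.update_of_ne hk]
        have hi' : ∀ k, 1 ≤ i' k ∧ i' k ≤ m := by
          intro k
          by_cases hk : k = j
          · subst hk
            rw [hi'j]
            have := (hi k).2
            omega
          · rw [hi'k k hk]; exact hi k
        have e2 : ∑ k, i k = (∑ k ∈ Finset.univ \ {j}, i k) + i j :=
          Finset.sum_eq_sum_sdiff_singleton_add (Finset.mem_univ j) _
        have e1 : ∑ k, i' k = (i j - 1) + ∑ k ∈ Finset.univ \ {j}, i k := by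
          rw [hi'def, Finset.sum_update_of_mem (Finset.mem_univ j)]
        have hsum' : ∑ k, i' k = n - 1 := by omega
        have hlt : n - 1 < n := by omega
        have hxub : ‖x i - x i'‖ ≤ 1 / ((m:ℝ) - 1) := by
          apply pi_norm_le_iff_of_nonneg (by positivity) |>.mpr
          intro k
          rw [Pi.sub_apply, Real.norm_eq_abs]
          by_cases hk : k = j
          · subst hk
            rw [hx, hx, hi'j]
            rw [Nat.cast_sub (hi k).1, Nat.cast_one]
            rw [div_sub_div_same]
            have hnum : ((i k : ℝ) - 1) - ((i k : ℝ) - 1 - 1) = 1 := by ring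
            rw [hnum, abs_of_nonneg (by positivity)]
          · rw [hx, hx, hi'k k hk, sub_self, abs_zero]
            positivity
        have hnorm : M * ‖x i - x i'‖ ≤ M / ((m:ℝ) - 1) := by
          rw [div_eq_mul_one_div]
          exact mul_le_mul_of_nonneg_left hxub (le_of_lt hM)
        have hfdiff : |f (x i) - f (x i')| ≤ M / ((m:ℝ) - 1) :=
          le_trans (hf _ _ (hxmem i hi) (hxmem i' hi')) hnorm
        have hδi := hη i hi
        have hδi' := hη i' hi'
        have hδ0 := hδ.1
        have hhd : |h i - h i'| < 1/2 := by
          have heq : h i - h i' = (f (x i) - f (x i')) + (η i - η i') := by rw [hh]; ring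
          rw [heq]
          calc |(f (x i) - f (x i')) + (η i - η i')| ≤ |f (x i) - f (x i')| + |η i - η i'| :=
                abs_add_le _ _
            _ ≤ |f (x i) - f (x i')| + (|η i| + |η i'|) := by
                have := abs_sub (η i) (η i'); linarith
            _ ≤ M / ((m:ℝ) - 1) + (δ + δ) := by linarith
            _ < 1/2 := by linarith
        have hU : U (gh i - gh i') = h i - h i' := by
          rw [hgh, hgh]
          exact U_fract_sub _ _ hhd
        rw [hrec i hi j hjmax hj2, ← hi'def, hU, ih (n-1) hlt i' hsum' hi']
        ring
  intro i hi
  rw [key (∑ k, i k) i rfl hi]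
  have heq : h i - (⌊h one⌋:ℝ) + (⌊h one⌋:ℝ) - f (x i) = η i := by rw [hh]; ring
  rw [heq]
  exact hη i hi
end

section
/- Let f, f̂ : [0,1] → ℝ and let h = exp(2πi f), ĝ = exp(2πi f̂) pointwise. If 0 < ε < 1/2 and |ĝ(x) - h(x)| ≤ ε at a point x, then d_w(f̂(x) mod 1, f(x) mod 1) ≤ (1/π) arcsin(ε/(1-ε)), where d_w(a,b) = min(|a-b|, 1-|a-b|) is the wrap-around distance on [0,1). -/
open Real Complex

/-- Wrap-around distance on [0,1). -/
noncomputable def dw (a b : ℝ) : ℝ := min |a - b| (1 - |a - b|)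

/-! The chord between `exp (2πi a)` and `exp (2πi b)` has length `2 |sin (π (a - b))|`.
This only depends on `a - b` modulo `1`, and on the circle of length `1` it equals
`2 sin (π · dw)`, so the hypothesis gives `sin (π · dw) ≤ ε / 2 ≤ ε / (1 - ε)`; since
`π · dw ∈ [0, π/2]`, taking `arcsin` concludes. -/

lemma norm_exp_two_pi_I_mul_sub_exp (a b : ℝ) :
    ‖Complex.exp (2 * π * I * a) - Complex.exp (2 * π * I * b)‖ = 2 * |Real.sin (π * (a - b))| := by
  have hfactor : Complex.exp (2 * π * I * a) - Complex.exp (2 * π * I * b)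
      = Complex.exp (I * ↑(2 * π * b)) * (Complex.exp (I * ↑(2 * π * (a - b))) - 1) := by
    rw [mul_sub, mul_one, ← Complex.exp_add]
    push_cast
    ring_nf
  rw [hfactor, norm_mul, Complex.norm_exp_I_mul_ofReal, one_mul,
    Complex.norm_exp_I_mul_ofReal_sub_one, norm_mul, Real.norm_eq_abs, Real.norm_eq_abs, abs_two]
  ring_nf

lemma abs_sin_pi_mul_add_intCast (t : ℝ) (n : ℤ) :
    |Real.sin (π * (t + n))| = |Real.sin (π * t)| := by
  rw [mul_add, mul_comm π n, Real.sin_add_int_mul_pi, abs_mul, abs_neg_one_zpow, one_mul]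

lemma sin_pi_mul_dw {u v : ℝ} (h : |u - v| ≤ 1) :
    Real.sin (π * dw u v) = |Real.sin (π * (u - v))| := by
  have hle : |π * (u - v)| ≤ π := by
    rw [abs_mul, abs_of_pos Real.pi_pos]
    exact mul_le_of_le_one_right Real.pi_pos.le h
  have hsin_abs : |Real.sin (π * (u - v))| = Real.sin (π * |u - v|) := by
    rw [Real.abs_sin_eq_sin_abs_of_abs_le_pi hle, abs_mul, abs_of_pos Real.pi_pos]
  rw [hsin_abs, dw]
  rcases min_cases |u - v| (1 - |u - v|) with ⟨hmin, _⟩ | ⟨hmin, _⟩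
  · rw [hmin]
  · rw [hmin, mul_sub, mul_one, Real.sin_pi_sub]

lemma abs_fract_sub_fract_le_one (a b : ℝ) : |Int.fract a - Int.fract b| ≤ 1 := by
  rw [abs_le]
  constructor <;>
  linarith [Int.fract_nonneg a, Int.fract_lt_one a, Int.fract_nonneg b, Int.fract_lt_one b]

lemma dw_mem_Icc {u v : ℝ} (h : |u - v| ≤ 1) : dw u v ∈ Set.Icc 0 (1 / 2) := by
  unfold dw
  constructor
  · exact le_min (abs_nonneg _) (by linarith)
  · linarith [min_le_left |u - v| (1 - |u - v|), min_le_right |u - v| (1 - |u - v|)]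

lemma abs_sin_pi_mul_sub_eq_sin_pi_mul_dw_fract (a b : ℝ) :
    |Real.sin (π * (a - b))| = Real.sin (π * dw (Int.fract a) (Int.fract b)) := by
  have hsplit : a - b = (Int.fract a - Int.fract b) + ((⌊a⌋ - ⌊b⌋ : ℤ) : ℝ) := by
    push_cast
    linarith [Int.floor_add_fract a, Int.floor_add_fract b]
  rw [hsplit, abs_sin_pi_mul_add_intCast, sin_pi_mul_dw (abs_fract_sub_fract_le_one a b)]

theorem stmt12_general (f fh : ℝ → ℝ) (ε : ℝ) (hε2 : ε < 1/2) (x : ℝ)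
    (h : ‖Complex.exp (2 * Real.pi * Complex.I * (fh x)) -
          Complex.exp (2 * Real.pi * Complex.I * (f x))‖ ≤ ε) :
    dw (Int.fract (fh x)) (Int.fract (f x)) ≤ (1 / Real.pi) * Real.arcsin (ε / (1 - ε)) := by
  have hε : 0 ≤ ε := (norm_nonneg _).trans h
  rw [norm_exp_two_pi_I_mul_sub_exp, abs_sin_pi_mul_sub_eq_sin_pi_mul_dw_fract] at h
  set d := dw (Int.fract (fh x)) (Int.fract (f x))
  have hd : d ∈ Set.Icc 0 (1 / 2) := dw_mem_Icc (abs_fract_sub_fract_le_one _ _)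
  have hsin : Real.sin (π * d) ≤ ε / (1 - ε) := calc
    Real.sin (π * d) ≤ ε / 2 := by linarith
    _ ≤ ε / (1 - ε) := div_le_div_of_nonneg_left hε (by linarith) (by linarith)
  have hπd : π * d ∈ Set.Ioc (-(π / 2)) (π / 2) :=
    ⟨by nlinarith [Real.pi_pos, hd.1], by nlinarith [Real.pi_pos, hd.2]⟩
  have harcsin : π * d ≤ Real.arcsin (ε / (1 - ε)) := (Real.le_arcsin_iff_sin_le' hπd).2 hsin
  rw [one_div_mul_eq_div, le_div_iff₀ Real.pi_pos]
  linarith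

theorem stmt12 (f fh : ℝ → ℝ) (ε : ℝ) (hε1 : 0 < ε) (hε2 : ε < 1/2) (x : ℝ)
    (h : ‖Complex.exp (2 * Real.pi * Complex.I * (fh x)) -
          Complex.exp (2 * Real.pi * Complex.I * (f x))‖ ≤ ε) :
    dw (Int.fract (fh x)) (Int.fract (f x)) ≤ (1 / Real.pi) * Real.arcsin (ε / (1 - ε)) :=
  stmt12_general f fh ε hε2 x h
end
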